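/- Let V be a real inner product space, let E₁, E₂ : V → ℝ, and let g₁, g₂ : V → V satisfy the subgradient (convexity) inequalities E₁(y) ≥ E₁(x) + ⟪g₁(x), y − x⟫ and E₂(y) ≥ E₂(x) + ⟪g₂(x), y − x⟫ for all x, y ∈ V. Let τ > 0 and suppose u, u′ ∈ V satisfy the semi-implicit convexity splitting step u′ = u − τ (g₁(u′) − g₂(u)). Then the energy E = E₁ − E₂ is non-increasing over the step: E₁(u′) − E₂(u′) ≤ E₁(u) − E₂(u). Moreover, E₁(u′) − E₂(u′) ≤ E₁(u) − E₂(u) − ‖u′ − u‖²/τ. -/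

import Mathlib

open RealInnerProductSpace

/-! The subgradient inequalities for `E₁` at `u'` and for `E₂` at `u` bound the energy change by
`-⟪g₁ u' - g₂ u, u - u'⟫`, and the scheme makes `g₁ u' - g₂ u = τ⁻¹ • (u - u')`, so this bound
is `-‖u' - u‖² / τ ≤ 0`. -/

section ConvexitySplitting

variable {V : Type*} [NormedAddCommGroup V] [InnerProductSpace ℝ V]

theorem sub_energy_le_sub_inner_of_subgradient {E₁ E₂ : V → ℝ} {g₁ g₂ : V → V}
    (h1 : ∀ x y : V, E₁ x + ⟪g₁ x, y - x⟫ ≤ E₁ y)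
    (h2 : ∀ x y : V, E₂ x + ⟪g₂ x, y - x⟫ ≤ E₂ y) (u u' : V) :
    E₁ u' - E₂ u' ≤ E₁ u - E₂ u - ⟪g₁ u' - g₂ u, u - u'⟫ := by
  have h1' := h1 u' u
  have h2' := h2 u u'
  have hsplit : ⟪g₁ u' - g₂ u, u - u'⟫ = ⟪g₁ u', u - u'⟫ + ⟪g₂ u, u' - u⟫ := by
    simp only [inner_sub_left, inner_sub_right]
    ring
  linarith

theorem inner_eq_norm_sq_div_of_eq_sub_smul {τ : ℝ} (hτ : τ ≠ 0) {u u' w : V}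
    (hstep : u' = u - τ • w) :
    ⟪w, u - u'⟫ = ‖u' - u‖ ^ 2 / τ := by
  have hw : w = τ⁻¹ • (u - u') := by
    rw [hstep, sub_sub_cancel, smul_smul, inv_mul_cancel₀ hτ, one_smul]
  rw [hw, real_inner_smul_left, real_inner_self_eq_norm_sq, norm_sub_rev, div_eq_inv_mul]

end ConvexitySplitting

/-- Unconditional energy stability of Eyre's convexity splitting scheme: if `E₁, E₂` are
convex with (sub)gradients `g₁, g₂` and `u' = u − τ (g₁ u' − g₂ u)` with `τ > 0`, then the
energy `E = E₁ − E₂` does not increase over the step, and in fact decreases by at least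
`‖u' − u‖²/τ`. -/
theorem convexity_splitting_energy_stable
    {V : Type*} [NormedAddCommGroup V] [InnerProductSpace ℝ V]
    (E₁ E₂ : V → ℝ) (g₁ g₂ : V → V)
    (h1 : ∀ x y : V, E₁ x + ⟪g₁ x, y - x⟫ ≤ E₁ y)
    (h2 : ∀ x y : V, E₂ x + ⟪g₂ x, y - x⟫ ≤ E₂ y)
    (τ : ℝ) (hτ : 0 < τ) (u u' : V)
    (hstep : u' = u - τ • (g₁ u' - g₂ u)) :
    E₁ u' - E₂ u' ≤ E₁ u - E₂ u ∧
      E₁ u' - E₂ u' ≤ E₁ u - E₂ u - ‖u' - u‖ ^ 2 / τ := by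
  have hdescent := sub_energy_le_sub_inner_of_subgradient h1 h2 u u'
  rw [inner_eq_norm_sq_div_of_eq_sub_smul hτ.ne' hstep] at hdescent
  have hdecrement : 0 ≤ ‖u' - u‖ ^ 2 / τ := by positivity
  exact ⟨by linarith, hdescent⟩
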